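/- arXiv:1207.5383 — 3 statements merged into one kernel-verified Lean document; each statement's English description precedes it below -/
import Mathlib

section
/- Let S be a closed subspace of L²(G) with orthogonal projection P : L²(G) → S, and suppose S is a reproducing kernel space: there is a constant C such that for every f ∈ S and x ∈ G, |f(x)| ≤ C‖f‖₂, with point evaluation given by f(x) = ⟨f, E_x⟩ for some E_x ∈ S with ‖E_x‖₂ ≤ C. If m ∈ L¹(G) ∩ L∞(G) is nonnegative, then the multiplier M_m : S → S, M_m(f) = P(m f), is trace class and trace(M_m) ≤ C²‖m‖₁. -/
open MeasureTheory

/-!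
Since `P` is self-adjoint and `e i ∈ S`, the `i`-th diagonal entry of `M_m` is
`⟪m e i, e i⟫ = ∫ m |e i|²`. Summing over a finite set of indices and exchanging sum and
integral, the integrand is `m(x) ∑ᵢ |⟪e i, E x⟫|² ≤ m(x) ‖E x‖² ≤ C² m(x)` by Bessel's
inequality, so every partial sum of the diagonal is at most `C² ∫ m`.
-/

section Multiplication

variable {α : Type*} [MeasurableSpace α] {μ : Measure α} {𝕜 : Type*} [RCLike 𝕜]
  {f g : Lp 𝕜 2 μ} {m : α → ℝ}

theorem ae_re_inner_eq_mul_sq_norm_of_ae_eq_mul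
    (hg : (g : α → 𝕜) =ᵐ[μ] fun x => (m x : 𝕜) * f x) :
    (fun x => RCLike.re (inner 𝕜 (g x) (f x))) =ᵐ[μ] fun x => m x * ‖f x‖ ^ 2 := by
  filter_upwards [hg] with x hx
  rw [RCLike.inner_apply, hx, map_mul (starRingEnd 𝕜), RCLike.conj_ofReal, mul_left_comm, RCLike.mul_conj,
    ← RCLike.ofReal_pow, ← RCLike.ofReal_mul, RCLike.ofReal_re]

theorem integrable_mul_sq_norm_of_ae_eq_mul
    (hg : (g : α → 𝕜) =ᵐ[μ] fun x => (m x : 𝕜) * f x) :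
    Integrable (fun x => m x * ‖f x‖ ^ 2) μ :=
  (L2.integrable_inner g f).re.congr (ae_re_inner_eq_mul_sq_norm_of_ae_eq_mul hg)

theorem re_inner_eq_integral_mul_sq_norm_of_ae_eq_mul
    (hg : (g : α → 𝕜) =ᵐ[μ] fun x => (m x : 𝕜) * f x) :
    RCLike.re (inner 𝕜 g f) = ∫ x, m x * ‖f x‖ ^ 2 ∂μ := by
  rw [L2.inner_def, ← integral_re (L2.integrable_inner g f)]
  exact integral_congr_ae (ae_re_inner_eq_mul_sq_norm_of_ae_eq_mul hg)

end Multiplication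

section ReproducingKernel

variable {α : Type*} [MeasurableSpace α] {μ : Measure α} {𝕜 : Type*} [RCLike 𝕜]
  {S : Submodule 𝕜 (Lp 𝕜 2 μ)} {C : ℝ} {E : α → S}

theorem ae_sum_sq_norm_le_of_orthonormal (hEnorm : ∀ x, ‖E x‖ ≤ C)
    (hrepr : ∀ f : S, ∀ᵐ x ∂μ, ((f : Lp 𝕜 2 μ) : α → 𝕜) x = inner 𝕜 (E x) f)
    {ι : Type*} {e : ι → S} (he : Orthonormal 𝕜 e) (s : Finset ι) :
    ∀ᵐ x ∂μ, ∑ i ∈ s, ‖((e i : Lp 𝕜 2 μ) : α → 𝕜) x‖ ^ 2 ≤ C ^ 2 := by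
  have hrepr_s : ∀ᵐ x ∂μ, ∀ i ∈ s, ((e i : Lp 𝕜 2 μ) : α → 𝕜) x = inner 𝕜 (E x) (e i) :=
    (ae_ball_iff s.countable_toSet).2 fun i _ => hrepr (e i)
  filter_upwards [hrepr_s] with x hx
  calc ∑ i ∈ s, ‖((e i : Lp 𝕜 2 μ) : α → 𝕜) x‖ ^ 2
      = ∑ i ∈ s, ‖inner 𝕜 (e i) (E x)‖ ^ 2 :=
        Finset.sum_congr rfl fun i hi => by rw [hx i hi, norm_inner_symm]
    _ ≤ ‖E x‖ ^ 2 := he.sum_inner_products_le (E x)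
    _ ≤ C ^ 2 := pow_le_pow_left₀ (norm_nonneg _) (hEnorm x) 2

theorem sum_integral_mul_sq_norm_le_of_orthonormal (hEnorm : ∀ x, ‖E x‖ ≤ C)
    (hrepr : ∀ f : S, ∀ᵐ x ∂μ, ((f : Lp 𝕜 2 μ) : α → 𝕜) x = inner 𝕜 (E x) f)
    {m : α → ℝ} (hm0 : ∀ᵐ x ∂μ, 0 ≤ m x) (hmint : Integrable m μ)
    {ι : Type*} {e : ι → S} (he : Orthonormal 𝕜 e)
    (hint : ∀ i, Integrable (fun x => m x * ‖((e i : Lp 𝕜 2 μ) : α → 𝕜) x‖ ^ 2) μ)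
    (s : Finset ι) :
    ∑ i ∈ s, ∫ x, m x * ‖((e i : Lp 𝕜 2 μ) : α → 𝕜) x‖ ^ 2 ∂μ ≤ C ^ 2 * ∫ x, m x ∂μ := by
  have hpointwise : ∀ᵐ x ∂μ,
      ∑ i ∈ s, m x * ‖((e i : Lp 𝕜 2 μ) : α → 𝕜) x‖ ^ 2 ≤ C ^ 2 * m x := by
    filter_upwards [hm0, ae_sum_sq_norm_le_of_orthonormal hEnorm hrepr he s] with x hx hsum
    rw [← Finset.mul_sum, mul_comm (C ^ 2)]
    exact mul_le_mul_of_nonneg_left hsum hx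
  calc ∑ i ∈ s, ∫ x, m x * ‖((e i : Lp 𝕜 2 μ) : α → 𝕜) x‖ ^ 2 ∂μ
      = ∫ x, ∑ i ∈ s, m x * ‖((e i : Lp 𝕜 2 μ) : α → 𝕜) x‖ ^ 2 ∂μ :=
        (integral_finsetSum s fun i _ => hint i).symm
    _ ≤ ∫ x, C ^ 2 * m x ∂μ :=
        integral_mono_ae (integrable_finsetSum s fun i _ => hint i) (hmint.const_mul _)
          hpointwise
    _ = C ^ 2 * ∫ x, m x ∂μ := integral_const_mul _ _

end ReproducingKernel

theorem stmt1_general {α : Type*} [MeasurableSpace α] {μ : Measure α}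
    (S : Submodule ℂ (Lp ℂ 2 μ)) [CompleteSpace S]
    (C : ℝ) (E : α → S) (hEnorm : ∀ x, ‖E x‖ ≤ C)
    (hrepr : ∀ f : S, ∀ᵐ x ∂μ, ((f : Lp ℂ 2 μ) : α → ℂ) x = inner ℂ (E x) f)
    (m : α → ℝ) (hm0 : ∀ᵐ x ∂μ, 0 ≤ m x)
    (hmint : Integrable m μ)
    (Mul : Lp ℂ 2 μ → Lp ℂ 2 μ)
    (hMul : ∀ f : Lp ℂ 2 μ, (Mul f : α → ℂ) =ᵐ[μ] fun x => (m x : ℂ) * f x) :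
    ∀ {ι : Type*} (e : HilbertBasis ι ℂ S),
      Summable (fun i =>
        (inner ℂ (S.orthogonalProjectionOnto (Mul (e i : Lp ℂ 2 μ))) (e i) : ℂ).re) ∧
      ∑' i, (inner ℂ (S.orthogonalProjectionOnto (Mul (e i : Lp ℂ 2 μ))) (e i) : ℂ).re
        ≤ C ^ 2 * ∫ x, m x ∂μ := by
  intro ι e
  have hdiag : ∀ i,
      (inner ℂ (S.orthogonalProjectionOnto (Mul (e i : Lp ℂ 2 μ))) (e i) : ℂ).re
        = ∫ x, m x * ‖((e i : Lp ℂ 2 μ) : α → ℂ) x‖ ^ 2 ∂μ := fun i => by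
    rw [S.inner_orthogonalProjectionOnto_eq_of_mem_right (e i)]
    exact re_inner_eq_integral_mul_sq_norm_of_ae_eq_mul (hMul _)
  have hnonneg : ∀ i, 0 ≤ ∫ x, m x * ‖((e i : Lp ℂ 2 μ) : α → ℂ) x‖ ^ 2 ∂μ := fun i =>
    integral_nonneg_of_ae (by filter_upwards [hm0] with x hx; positivity)
  have hpartial := sum_integral_mul_sq_norm_le_of_orthonormal hEnorm hrepr hm0 hmint
    e.orthonormal (fun i => integrable_mul_sq_norm_of_ae_eq_mul (hMul _))
  simp only [hdiag]
  exact ⟨summable_of_sum_le hnonneg hpartial, Real.tsum_le_of_sum_le hnonneg hpartial⟩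

/-- If `S ⊆ L²(G)` is a closed reproducing kernel subspace (point
evaluations represented by kernel elements `E x ∈ S` with `‖E x‖ ≤ C`), and
`m ∈ L¹ ∩ L∞` is nonnegative, then the multiplier `M_m f = P (m f)` is trace
class on `S` with `trace(M_m) ≤ C² ‖m‖₁`: for every orthonormal (Hilbert) basis
`(e i)` of `S`, the diagonal sums are summable with total at most `C² ∫ m`. -/
theorem stmt1 {α : Type*} [MeasurableSpace α] {μ : Measure α} [SigmaFinite μ]
    (S : Submodule ℂ (Lp ℂ 2 μ)) [CompleteSpace S]
    (C : ℝ) (E : α → S) (hEnorm : ∀ x, ‖E x‖ ≤ C)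
    (hrepr : ∀ f : S, ∀ᵐ x ∂μ, ((f : Lp ℂ 2 μ) : α → ℂ) x = inner ℂ (E x) f)
    (m : α → ℝ) (hmmeas : AEMeasurable m μ) (hm0 : ∀ᵐ x ∂μ, 0 ≤ m x)
    (hmint : Integrable m μ) (hmbd : ∃ B, ∀ᵐ x ∂μ, |m x| ≤ B)
    (Mul : Lp ℂ 2 μ → Lp ℂ 2 μ)
    (hMul : ∀ f : Lp ℂ 2 μ, (Mul f : α → ℂ) =ᵐ[μ] fun x => (m x : ℂ) * f x) :
    ∀ {ι : Type*} (e : HilbertBasis ι ℂ S),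
      Summable (fun i =>
        (inner ℂ (S.orthogonalProjectionOnto (Mul (e i : Lp ℂ 2 μ))) (e i) : ℂ).re) ∧
      ∑' i, (inner ℂ (S.orthogonalProjectionOnto (Mul (e i : Lp ℂ 2 μ))) (e i) : ℂ).re
        ≤ C ^ 2 * ∫ x, m x ∂μ :=
  stmt1_general S C E hEnorm hrepr m hm0 hmint Mul hMul
end

section
/- A polyanalytic function of order n on ℂ that vanishes on a nonempty open subset of ℂ vanishes identically. Here F : ℂ → ℂ is polyanalytic of order n if F(z) = Σ_{k=0}^{n-1} conj(z)^k F_k(z) with each F_k entire (equivalently (∂/∂z̄)ⁿ F ≡ 0 for the smooth function F). -/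
open ComplexConjugate

/- A polyanalytic function is a polynomial in `conj z` with entire coefficients, hence real
analytic on `ℂ`; by the identity theorem for real-analytic functions on the connected space `ℂ`,
vanishing on an open set forces it to vanish everywhere. -/

theorem analyticAt_real_polyanalytic {n : ℕ} {Fk : Fin n → ℂ → ℂ}
    (hFk : ∀ k, Differentiable ℂ (Fk k)) (z : ℂ) :
    AnalyticAt ℝ (fun w => ∑ k : Fin n, conj w ^ (k : ℕ) * Fk k w) z := by
  refine Finset.analyticAt_fun_sum _ fun k _ => ?_
  exact (Complex.conjCLE.analyticAt z).pow _ |>.mul ((hFk k).analyticAt z).restrictScalars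

/-- A polyanalytic function of order `n` on `ℂ`, i.e.
`F z = Σ_{k<n} conj(z)^k F_k z` with each `F_k` entire, that vanishes on a
nonempty open subset of `ℂ` vanishes identically. -/
theorem stmt14 (n : ℕ) (F : ℂ → ℂ) (Fk : Fin n → ℂ → ℂ)
    (hFk : ∀ k, Differentiable ℂ (Fk k))
    (hF : ∀ z : ℂ, F z = ∑ k : Fin n, (starRingEnd ℂ z) ^ (k : ℕ) * Fk k z)
    (U : Set ℂ) (hU : IsOpen U) (hUne : U.Nonempty)
    (hvanish : ∀ z ∈ U, F z = 0) :
    ∀ z : ℂ, F z = 0 := by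
  have hA : AnalyticOnNhd ℝ F Set.univ := by
    rw [funext hF]
    exact fun z _ => analyticAt_real_polyanalytic hFk z
  obtain ⟨z₀, hz₀⟩ := hUne
  have hzero : F =ᶠ[nhds z₀] 0 := Filter.eventuallyEq_of_mem (hU.mem_nhds hz₀) hvanish
  exact fun z => hA.eqOn_zero_of_preconnected_of_eventuallyEq_zero isPreconnected_univ
    (Set.mem_univ z₀) hzero (Set.mem_univ z)
end

section
/- Let φ ∈ L²(ℝ) \ {0} be the Gaussian φ(t) = 2^{1/4} e^{-πt²}, and Ω ⊆ ℝ² a measurable set with nonempty interior. Then the time-frequency localization operator H_Ω f = V_φ*(1_Ω V_φ f) on L²(ℝ) has infinite rank. -/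
open MeasureTheory

/-- The one-dimensional short-time Fourier transform
`V_φ f (x, ξ) = ∫ f t conj(φ (t-x)) e^{-2πi ξ t} dt`. -/
noncomputable def STFT1 (φ f : ℝ → ℂ) (p : ℝ × ℝ) : ℂ :=
  ∫ t : ℝ, f t * (starRingEnd ℂ) (φ (t - p.1)) *
    Complex.exp (-2 * Real.pi * Complex.I * (p.2 * t : ℝ))

/-- The time-frequency localization operator
`H_Ω f (t) = ∫_Ω V_φ f(x,ξ) φ(t-x) e^{2πi ξ t} dx dξ`. -/
noncomputable def locOpSet1 (φ : ℝ → ℂ) (Ω : Set (ℝ × ℝ)) (f : ℝ → ℂ) (t : ℝ) : ℂ :=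
  ∫ z in Ω, STFT1 φ f z * φ (t - z.1) *
    Complex.exp (2 * Real.pi * Complex.I * (z.2 * t : ℝ))

/-- The normalized Gaussian window `φ(t) = 2^{1/4} e^{-π t²}`. -/
noncomputable def gaussWindow (t : ℝ) : ℂ :=
  ((2 : ℝ) ^ ((1 : ℝ) / 4) : ℝ) * Complex.exp (-(Real.pi * t ^ 2))

/-!
If `∑ cₖ H_Ω gₖ = 0` for the Gaussians `gₖ(t) = e^{-πt² + 2πkt}`, put `F = ∑ cₖ gₖ`. By Fubini,
`⟨H_Ω F, F⟩ = ∫_Ω |V_φ F|²`, so the continuous function `V_φ F` vanishes on the interior of `Ω`.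
But `V_φ F (x, ξ)` is a nowhere vanishing Gaussian factor times the entire function
`E(w) = ∑ cₖ e^{πkw + πk²/2}` at `w = x - iξ`. Hence `E` vanishes on an open set, so everywhere,
and the linear independence of the exponentials `w ↦ e^{πkw}` forces `c = 0`.
-/

open Complex Real ComplexConjugate

section Localization

variable {φ f : ℝ → ℂ} {B : ℝ} {Ω : Set (ℝ × ℝ)}

lemma norm_STFT1_integrand_le (hφB : ∀ s, ‖φ s‖ ≤ B) (p : ℝ × ℝ) (t : ℝ) :
    ‖f t * conj (φ (t - p.1)) * cexp (-2 * π * I * (p.2 * t : ℝ))‖ ≤ B * ‖f t‖ := by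
  rw [norm_mul, norm_mul, Complex.norm_conj, Complex.norm_exp]
  simpa [mul_comm] using mul_le_mul_of_nonneg_left (hφB (t - p.1)) (norm_nonneg (f t))

lemma integrable_STFT1_integrand (hφ : Continuous φ) (hφB : ∀ s, ‖φ s‖ ≤ B) (hf : Integrable f)
    (p : ℝ × ℝ) :
    Integrable fun t => f t * conj (φ (t - p.1)) * cexp (-2 * π * I * (p.2 * t : ℝ)) :=
  (hf.norm.const_mul B).mono'
    (hf.aestronglyMeasurable.mul (by fun_prop) |>.mul (by fun_prop))
    (ae_of_all _ (norm_STFT1_integrand_le hφB p))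

lemma continuous_STFT1 (hφ : Continuous φ) (hφB : ∀ s, ‖φ s‖ ≤ B) (hf : Integrable f) :
    Continuous (STFT1 φ f) :=
  continuous_of_dominated
    (fun p => (integrable_STFT1_integrand hφ hφB hf p).aestronglyMeasurable)
    (fun p => ae_of_all _ (norm_STFT1_integrand_le hφB p)) (hf.norm.const_mul B)
    (ae_of_all _ fun t => by fun_prop)

lemma STFT1_sum {ι : Type*} [Fintype ι] (hφ : Continuous φ) (hφB : ∀ s, ‖φ s‖ ≤ B)
    {f : ι → ℝ → ℂ} (hf : ∀ i, Integrable (f i)) (c : ι → ℂ) :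
    STFT1 φ (∑ i, c i • f i) = ∑ i, c i • STFT1 φ (f i) := by
  ext p
  simp only [STFT1, Finset.sum_apply, Pi.smul_apply, smul_eq_mul, Finset.sum_mul, mul_assoc]
  rw [integral_finsetSum]
  · simp only [integral_const_mul]
  · intro i _
    simpa only [mul_assoc] using (integrable_STFT1_integrand hφ hφB (hf i) p).const_mul (c i)

lemma integrableOn_locOpSet1_integrand (hφ : Continuous φ) (hφB : ∀ s, ‖φ s‖ ≤ B)
    (hV : IntegrableOn (STFT1 φ f) Ω) (t : ℝ) :
    IntegrableOn (fun z => STFT1 φ f z * φ (t - z.1) * cexp (2 * π * I * (z.2 * t : ℝ))) Ω := by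
  refine (hV.norm.mul_const B).mono' (hV.aestronglyMeasurable.mul (by fun_prop) |>.mul
    (by fun_prop)) (ae_of_all _ fun z => ?_)
  rw [norm_mul, norm_mul, Complex.norm_exp]
  simpa using mul_le_mul_of_nonneg_left (hφB (t - z.1)) (norm_nonneg (STFT1 φ f z))

lemma locOpSet1_sum {ι : Type*} [Fintype ι] (hφ : Continuous φ) (hφB : ∀ s, ‖φ s‖ ≤ B)
    {f : ι → ℝ → ℂ} (hf : ∀ i, Integrable (f i)) (hV : ∀ i, IntegrableOn (STFT1 φ (f i)) Ω)
    (c : ι → ℂ) :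
    locOpSet1 φ Ω (∑ i, c i • f i) = ∑ i, c i • locOpSet1 φ Ω (f i) := by
  ext t
  simp only [locOpSet1, STFT1_sum hφ hφB hf, Finset.sum_apply, Pi.smul_apply, smul_eq_mul,
    Finset.sum_mul, mul_assoc]
  rw [integral_finsetSum]
  · simp only [integral_const_mul]
  · intro i _
    simpa only [mul_assoc] using (integrableOn_locOpSet1_integrand hφ hφB (hV i) t).const_mul (c i)

/-- The kernel whose two iterated integrals are `⟨H_Ω f, f⟩` and `∫_Ω |V_φ f|²`. -/
noncomputable def locOpKernel (φ : ℝ → ℂ) (f : ℝ → ℂ) (t : ℝ) (z : ℝ × ℝ) : ℂ :=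
  STFT1 φ f z * φ (t - z.1) * cexp (2 * π * I * (z.2 * t : ℝ)) * conj (f t)

lemma integral_locOpKernel_time (φ f : ℝ → ℂ) (z : ℝ × ℝ) :
    ∫ t, locOpKernel φ f t z = STFT1 φ f z * conj (STFT1 φ f z) := by
  have h (t : ℝ) : locOpKernel φ f t z = STFT1 φ f z *
      conj (f t * conj (φ (t - z.1)) * cexp (-2 * π * I * (z.2 * t : ℝ))) := by
    simp only [locOpKernel, map_mul, conj_conj, ← Complex.exp_conj, map_neg, map_ofNat,
      Complex.conj_ofReal, Complex.conj_I]
    ring_nf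
  simp_rw [h, integral_const_mul, integral_conj]
  rfl

lemma setIntegral_locOpKernel_freq (φ f : ℝ → ℂ) (Ω : Set (ℝ × ℝ)) (t : ℝ) :
    ∫ z in Ω, locOpKernel φ f t z = locOpSet1 φ Ω f t * conj (f t) :=
  integral_mul_const _ _

lemma integrable_locOpKernel (hφ : Continuous φ) (hφB : ∀ s, ‖φ s‖ ≤ B) (hf : Integrable f)
    (hV : IntegrableOn (STFT1 φ f) Ω) :
    Integrable (Function.uncurry (locOpKernel φ f)) (volume.prod (volume.restrict Ω)) := by
  have hVc := continuous_STFT1 hφ hφB hf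
  refine ((hf.norm.mul_prod hV.norm).const_mul B).mono' ?_ (ae_of_all _ fun p => ?_)
  · exact (((hVc.comp continuous_snd).aestronglyMeasurable.mul (by fun_prop)).mul
      (by fun_prop)).mul (hf.aestronglyMeasurable.comp_fst (ν := volume.restrict Ω)).star
  · simp only [Function.uncurry, locOpKernel, norm_mul, Complex.norm_conj, Complex.norm_exp]
    have hre : (2 * π * I * (p.2.2 * p.1 : ℝ) : ℂ).re = 0 := by simp
    rw [hre, Real.exp_zero, mul_one]
    have := mul_le_mul_of_nonneg_left (hφB (p.1 - p.2.1))
      (mul_nonneg (norm_nonneg (STFT1 φ f p.2)) (norm_nonneg (f p.1)))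
    linarith

lemma STFT1_eqOn_zero_of_locOpSet1_eq_zero (hφ : Continuous φ) (hφB : ∀ s, ‖φ s‖ ≤ B)
    (hf : Integrable f) (hV : IntegrableOn (STFT1 φ f) Ω) (h : locOpSet1 φ Ω f = 0) :
    Set.EqOn (STFT1 φ f) 0 (interior Ω) := by
  have hK := integrable_locOpKernel hφ hφB hf hV
  have hsq : Integrable (fun z => ((normSq (STFT1 φ f z) : ℝ) : ℂ)) (volume.restrict Ω) := by
    simpa only [Function.uncurry_apply_pair, integral_locOpKernel_time, mul_conj] using
      hK.integral_prod_right
  have hzero : ∫ z in Ω, normSq (STFT1 φ f z) = 0 := by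
    have : ∫ z in Ω, ((normSq (STFT1 φ f z) : ℝ) : ℂ) = 0 := calc
      _ = ∫ z in Ω, ∫ t, locOpKernel φ f t z := by simp only [integral_locOpKernel_time, mul_conj]
      _ = ∫ t, ∫ z in Ω, locOpKernel φ f t z := (integral_integral_swap hK).symm
      _ = 0 := by simp [setIntegral_locOpKernel_freq, h]
    have hofReal : ∫ z in Ω, ((normSq (STFT1 φ f z) : ℝ) : ℂ) =
        ((∫ z in Ω, normSq (STFT1 φ f z) : ℝ) : ℂ) := integral_ofReal
    exact_mod_cast hofReal.symm.trans this
  have hae : (fun z => normSq (STFT1 φ f z)) =ᵐ[volume.restrict (interior Ω)] 0 :=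
    ae_restrict_of_ae_restrict_of_subset interior_subset <|
      (integral_eq_zero_iff_of_nonneg (fun z => normSq_nonneg _) (by simpa using hsq.re)).mp hzero
  intro z hz
  have hc : Continuous fun z => normSq (STFT1 φ f z) := by
    have := continuous_STFT1 hφ hφB hf; fun_prop
  simpa using Measure.eqOn_open_of_ae_eq hae isOpen_interior hc.continuousOn continuousOn_const hz

end Localization

lemma continuous_gaussWindow : Continuous gaussWindow := by
  unfold gaussWindow; fun_prop

lemma norm_gaussWindow_le (s : ℝ) : ‖gaussWindow s‖ ≤ 2 ^ (1 / 4 : ℝ) := by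
  have h : ‖cexp (-(π * s ^ 2))‖ ≤ 1 := by
    rw [Complex.norm_exp, Real.exp_le_one_iff]
    simpa [← ofReal_pow] using by positivity
  rw [gaussWindow, norm_mul, Complex.norm_real, Real.norm_of_nonneg (by positivity)]
  exact mul_le_of_le_one_right (by positivity) h

noncomputable def shiftedGauss (a t : ℝ) : ℂ := cexp (-π * t ^ 2 + 2 * π * a * t)

lemma integrable_shiftedGauss (a : ℝ) : Integrable (shiftedGauss a) := by
  unfold shiftedGauss
  simpa [neg_mul] using integrable_cexp_quadratic' (b := -π) (by simp [pi_pos]) (2 * π * a) 0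

lemma memLp_shiftedGauss (a : ℝ) : MemLp (shiftedGauss a) 2 := by
  refine (memLp_two_iff_integrable_sq_norm (integrable_shiftedGauss a).aestronglyMeasurable).2 ?_
  have h : ∀ t : ℝ, ‖shiftedGauss a t‖ ^ 2 = ‖cexp (-(2 * π) * t ^ 2 + 4 * π * a * t + 0)‖ := by
    intro t
    rw [shiftedGauss, ← norm_pow, ← Complex.exp_nat_mul]
    ring_nf
  simp_rw [h]
  exact (integrable_cexp_quadratic' (by simp [pi_pos]) _ _).norm

noncomputable def gaussSTFTConst : ℂ := (2 ^ (1 / 4 : ℝ) : ℝ) * ((π : ℂ) / (2 * π)) ^ (1 / 2 : ℂ)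

lemma gaussSTFTConst_ne_zero : gaussSTFTConst ≠ 0 := by
  have hπ : (π : ℂ) ≠ 0 := ofReal_ne_zero.2 pi_ne_zero
  refine mul_ne_zero (ofReal_ne_zero.2 (by positivity)) ?_
  rw [Ne, cpow_eq_zero_iff]
  exact fun h => hπ (by simpa [hπ] using h.1)

lemma STFT1_gaussWindow_shiftedGauss (a x ξ : ℝ) :
    STFT1 gaussWindow (shiftedGauss a) (x, ξ) = gaussSTFTConst *
      cexp (-π * x ^ 2 + π / 2 * (x - I * ξ) ^ 2) * cexp (π * a * (x - I * ξ) + π * a ^ 2 / 2) := by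
  have h (t : ℝ) : shiftedGauss a t * conj (gaussWindow (t - x)) *
      cexp (-2 * π * I * (ξ * t : ℝ)) = (2 ^ (1 / 4 : ℝ) : ℝ) *
      cexp (-2 * π * t ^ 2 + 2 * π * (a + x - I * ξ) * t + -π * x ^ 2) := by
    simp only [shiftedGauss, gaussWindow, map_mul, ← Complex.exp_conj, map_neg, map_pow,
      conj_ofReal]
    rw [mul_left_comm, mul_assoc, ← Complex.exp_add, ← Complex.exp_add]
    congr 2
    push_cast
    ring
  simp only [STFT1, h, integral_const_mul]
  rw [integral_cexp_quadratic (by simp [pi_pos])]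
  simp only [gaussSTFTConst, mul_assoc, ← Complex.exp_add]
  congr 3
  · ring
  · field_simp
    ring

lemma norm_STFT1_gaussWindow_shiftedGauss (a x ξ : ℝ) :
    ‖STFT1 gaussWindow (shiftedGauss a) (x, ξ)‖ = ‖gaussSTFTConst‖ * rexp (π * a ^ 2) *
      (rexp (-(π / 2) * (x - a) ^ 2) * rexp (-(π / 2) * ξ ^ 2)) := by
  rw [STFT1_gaussWindow_shiftedGauss, norm_mul, norm_mul, Complex.norm_exp, Complex.norm_exp]
  simp only [mul_assoc, ← Real.exp_add]
  congr 2
  simp only [add_re, mul_re, sub_re, sub_im, neg_re, neg_im, pow_two, mul_im, div_re, div_im,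
    ofReal_re, ofReal_im, I_re, I_im, re_ofNat, im_ofNat, normSq_ofNat]
  ring

lemma integrable_STFT1_gaussWindow_shiftedGauss (a : ℝ) :
    Integrable (STFT1 gaussWindow (shiftedGauss a)) := by
  have hV := continuous_STFT1 continuous_gaussWindow norm_gaussWindow_le (integrable_shiftedGauss a)
  have hx : Integrable fun x : ℝ => rexp (-(π / 2) * (x - a) ^ 2) :=
    (integrable_exp_neg_mul_sq (by positivity)).comp_sub_right a
  have hξ : Integrable fun ξ : ℝ => rexp (-(π / 2) * ξ ^ 2) := integrable_exp_neg_mul_sq (by positivity)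
  refine (integrable_norm_iff hV.aestronglyMeasurable).1 ?_
  simp_rw [fun z : ℝ × ℝ => norm_STFT1_gaussWindow_shiftedGauss a z.1 z.2]
  rw [Measure.volume_eq_prod]
  exact (hx.mul_prod hξ).const_mul _

lemma linearIndependent_cexp_mul {ι : Type*} {a : ι → ℂ} (ha : Function.Injective a) :
    LinearIndependent ℂ fun i (w : ℂ) => cexp (a i * w) := by
  let χ (i : ι) : Multiplicative ℂ →* ℂ :=
    { toFun := fun w => cexp (a i * w.toAdd)
      map_one' := by simp
      map_mul' := fun u v => by simp [mul_add, Complex.exp_add] }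
  have hχ : Function.Injective χ := fun i j hij => ha <| by
    have hderiv (b : ℂ) : HasDerivAt (fun w : ℂ => cexp (b * w)) b 0 := by
      simpa using ((hasDerivAt_id (0 : ℂ)).const_mul b).cexp
    have hfun : (fun w : ℂ => cexp (a i * w)) = fun w => cexp (a j * w) :=
      funext fun w => DFunLike.congr_fun hij (Multiplicative.ofAdd w)
    exact (hderiv (a i)).unique (hfun ▸ hderiv (a j))
  exact (linearIndependent_monoidHom (Multiplicative ℂ) ℂ).comp χ hχ

lemma eq_zero_of_sum_smul_locOpSet1_shiftedGauss_eq_zero {ι : Type*} [Fintype ι]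
    {Ω : Set (ℝ × ℝ)} (hΩ : (interior Ω).Nonempty) {a : ι → ℝ} (ha : Function.Injective a)
    {c : ι → ℂ} (h : ∑ i, c i • locOpSet1 gaussWindow Ω (shiftedGauss (a i)) = 0) : c = 0 := by
  have hf (i : ι) := integrable_shiftedGauss (a i)
  have hVf (i : ι) := (integrable_STFT1_gaussWindow_shiftedGauss (a i)).integrableOn (s := Ω)
  set F := ∑ i, c i • shiftedGauss (a i)
  have hV : Set.EqOn (STFT1 gaussWindow F) 0 (interior Ω) := by
    refine STFT1_eqOn_zero_of_locOpSet1_eq_zero continuous_gaussWindow norm_gaussWindow_le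
      (integrable_finsetSum' _ fun i _ => (hf i).smul (c i)) ?_ ?_
    · rw [STFT1_sum continuous_gaussWindow norm_gaussWindow_le hf]
      exact integrable_finsetSum' _ fun i _ => (hVf i).smul (c i)
    · rwa [locOpSet1_sum continuous_gaussWindow norm_gaussWindow_le hf hVf]
  set E : ℂ → ℂ := fun w => ∑ i, c i * cexp (π * a i * w + π * a i ^ 2 / 2)
  have hVE (x ξ : ℝ) : STFT1 gaussWindow F (x, ξ) =
      gaussSTFTConst * cexp (-π * x ^ 2 + π / 2 * (x - I * ξ) ^ 2) * E (x - I * ξ) := by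
    simp only [F, E, STFT1_sum continuous_gaussWindow norm_gaussWindow_le hf, Finset.sum_apply,
      Pi.smul_apply, smul_eq_mul, STFT1_gaussWindow_shiftedGauss, Finset.mul_sum]
    exact Finset.sum_congr rfl fun i _ => by ring
  -- `w ↦ (Re w, -Im w)` inverts `(x, ξ) ↦ x - iξ`
  set U : Set ℂ := (fun w => (w.re, -w.im)) ⁻¹' interior Ω
  have hEU : Set.EqOn E 0 U := fun w hw => by
    have hw' := hV hw
    rw [hVE, show ((w.re : ℂ) - I * ((-w.im : ℝ) : ℂ)) = w by apply Complex.ext <;> simp] at hw'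
    simpa [gaussSTFTConst_ne_zero, Complex.exp_ne_zero] using hw'
  have hE : E = 0 := by
    obtain ⟨z, hz⟩ := hΩ
    have hUo : IsOpen U := isOpen_interior.preimage (by fun_prop)
    have hzU : (⟨z.1, -z.2⟩ : ℂ) ∈ U := by simpa [U] using hz
    have hEan : AnalyticOnNhd ℂ E Set.univ :=
      (Differentiable.differentiableOn (by fun_prop)).analyticOnNhd isOpen_univ
    exact hEan.eq_of_eventuallyEq analyticOnNhd_const
      (Filter.eventually_of_mem (hUo.mem_nhds hzU) hEU)
  have hlin := Fintype.linearIndependent_iff.1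
    (linearIndependent_cexp_mul (a := fun i => π * a i) (by
      intro i j hij; exact ha (by simpa [pi_ne_zero] using hij)))
    (fun i => c i * cexp (π * a i ^ 2 / 2)) (by
      ext w
      simpa [E, Complex.exp_add, mul_comm, mul_left_comm, mul_assoc] using congrFun hE w)
  funext i
  simpa [Complex.exp_ne_zero] using hlin i

theorem stmt15_general (Ω : Set (ℝ × ℝ))
    (hΩint : (interior Ω).Nonempty) :
    ∀ n : ℕ, ∃ f : Fin n → ℝ → ℂ,
      (∀ i, MemLp (f i) 2 (volume : Measure ℝ)) ∧
      LinearIndependent ℂ (fun i => locOpSet1 gaussWindow Ω (f i)) := by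
  intro n
  refine ⟨fun i => shiftedGauss i, fun i => memLp_shiftedGauss i, ?_⟩
  refine Fintype.linearIndependent_iff.2 fun c hc => congrFun ?_
  exact eq_zero_of_sum_smul_locOpSet1_shiftedGauss_eq_zero hΩint
    (Nat.cast_injective.comp Fin.val_injective) hc

/-- for the Gaussian window `φ(t) = 2^{1/4} e^{-πt²}` and any
measurable `Ω ⊆ ℝ²` with nonempty interior, the localization operator
`H_Ω f = V_φ*(1_Ω V_φ f)` on `L²(ℝ)` has infinite rank: for every `n` there are
`n` functions in `L²(ℝ)` whose images under `H_Ω` are linearly independent. -/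
theorem stmt15 (Ω : Set (ℝ × ℝ)) (hΩmeas : MeasurableSet Ω)
    (hΩint : (interior Ω).Nonempty) :
    ∀ n : ℕ, ∃ f : Fin n → ℝ → ℂ,
      (∀ i, MemLp (f i) 2 (volume : Measure ℝ)) ∧
      LinearIndependent ℂ (fun i => locOpSet1 gaussWindow Ω (f i)) :=
  stmt15_general Ω hΩint
end
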